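/- Let π ∈ S_{n+1} be an involution fixing n+1 and let π_n ∈ S_n be its restriction to {1,…,n}. Then, with the paper's convention, 𝔄(π) = 𝔄(π_n) + #{a ∈ {1,…,n} : π_n(a) = a}. -/

import Mathlib

open Matrix

/-- `M` is a monomial anti-symmetric matrix with nonzero entries `±1`,
the `+1`'s above the main diagonal and the `-1`'s below it. -/
def GoodMat {n : ℕ} (M : Matrix (Fin n) (Fin n) ℂ) : Prop :=
  Mᵀ = -M ∧
  (∀ i j k : Fin n, M i j ≠ 0 → M i k ≠ 0 → j = k) ∧
  (∀ i j k : Fin n, M j i ≠ 0 → M k i ≠ 0 → j = k) ∧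
  (∀ i j : Fin n, M i j = 0 ∨ (i < j ∧ M i j = 1) ∨ (j < i ∧ M i j = -1))

/-- The monomial anti-symmetric `±1`-matrix associated to an involution. -/
def invMat {n : ℕ} (π : Equiv.Perm (Fin n)) : Matrix (Fin n) (Fin n) ℂ :=
  fun i j => if i < j ∧ π i = j then 1 else if j < i ∧ π j = i then -1 else 0

/-- Rank-control function: rank of the upper-left `k × l` submatrix
(with natural-number indices, clipped at `n`; in particular `rc A 0 l = 0`). -/
noncomputable def rc {n : ℕ} (A : Matrix (Fin n) (Fin n) ℂ) (k l : ℕ) : ℕ :=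
  (A.submatrix (fun x : Fin (min k n) => Fin.castLE (min_le_right k n) x)
    (fun y : Fin (min l n) => Fin.castLE (min_le_right l n) y)).rank

/-- The parameter `𝔄`: the number of equalities along the diagonals of the
strict upper triangle of the rank-control matrix, with `r₀ₖ := 0`. -/
noncomputable def AA {n : ℕ} (A : Matrix (Fin n) (Fin n) ℂ) : ℕ :=
  (Finset.univ.filter (fun p : Fin n × Fin n =>
    (p.1 : ℕ) < (p.2 : ℕ) ∧
      rc A ((p.1 : ℕ) + 1) ((p.2 : ℕ) + 1) = rc A (p.1 : ℕ) (p.2 : ℕ))).card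

/-- Number of inversions of a word. -/
def inversions (w : List ℕ) : ℕ :=
  ((Finset.range w.length ×ˢ Finset.range w.length).filter
    (fun p => p.1 < p.2 ∧ w.getD p.2 0 < w.getD p.1 0)).card

/-- `l` is the canonic form of the involution `π`: the list of the disjoint
transpositions `(iₜ, jₜ)` of `π` with `iₜ < jₜ`, sorted by first entries. -/
def IsCanonic {n : ℕ} (π : Equiv.Perm (Fin n)) (l : List (Fin n × Fin n)) : Prop :=
  (∀ p ∈ l, p.1 < p.2 ∧ π p.1 = p.2) ∧
  (∀ a : Fin n, a < π a → (a, π a) ∈ l) ∧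
  l.Pairwise (fun p q => p.1 < q.1)

/-- The word `i₁ j₁ i₂ j₂ ⋯ iₖ jₖ` (with 1-indexed letters) of a canonic form. -/
def wordOf {n : ℕ} (l : List (Fin n × Fin n)) : List ℕ :=
  l.flatMap fun p => [(p.1 : ℕ) + 1, (p.2 : ℕ) + 1]

open Classical in
lemma rank_monomial {m l : ℕ} (A : Matrix (Fin m) (Fin l) ℂ)
    (hcol : ∀ i i' j, A i j ≠ 0 → A i' j ≠ 0 → i = i') :
    A.rank = (Finset.univ.filter (fun i : Fin m => ∃ j, A i j ≠ 0)).card := by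
  classical
  rw [A.rank_eq_finrank_span_row]
  change Module.finrank ℂ ↥(Submodule.span ℂ (Set.range A)) = _
  set S := {i : Fin m // ∃ j, A i j ≠ 0}
  have hspan : Submodule.span ℂ (Set.range A) =
      Submodule.span ℂ (Set.range (fun i : S => A i.1)) := by
    apply le_antisymm
    · rw [Submodule.span_le]
      rintro _ ⟨i, rfl⟩
      by_cases h : ∃ j, A i j ≠ 0
      · exact Submodule.subset_span ⟨⟨i, h⟩, rfl⟩
      · push_neg at h
        have : A i = 0 := funext h
        rw [this]
        exact Submodule.zero_mem _
    · rw [Submodule.span_le]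
      rintro _ ⟨i, rfl⟩
      exact Submodule.subset_span ⟨i.1, rfl⟩
  rw [hspan]
  have hli : LinearIndependent ℂ (fun i : S => A i.1) := by
    rw [Fintype.linearIndependent_iff]
    intro g hg i
    obtain ⟨j, hj⟩ := i.2
    have := congrFun hg j
    simp only [Finset.sum_apply, Pi.smul_apply, smul_eq_mul, Pi.zero_apply] at this
    rw [Finset.sum_eq_single i] at this
    · exact (mul_eq_zero.mp this).resolve_right hj
    · intro b _ hb
      have : A b.1 j = 0 := by
        by_contra h
        exact hb (Subtype.ext (hcol _ _ _ h hj))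
      rw [this, mul_zero]
    · intro h; exact absurd (Finset.mem_univ i) h
  rw [finrank_span_eq_card hli]
  rw [Fintype.card_subtype]

lemma invMat_ne_zero_iff {n : ℕ} (π : Equiv.Perm (Fin n)) (hπ : ∀ x, π (π x) = x)
    (i j : Fin n) : invMat π i j ≠ 0 ↔ π i = j ∧ i ≠ j := by
  unfold invMat
  rcases lt_trichotomy i j with h | h | h
  · constructor
    · intro hne
      by_cases hp : π i = j
      · exact ⟨hp, h.ne⟩
      · simp [hp, h.asymm, h] at hne
    · rintro ⟨hp, _⟩; simp [hp, h]
  · subst h; simp [lt_irrefl]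
  · constructor
    · intro hne
      by_cases hp : π j = i
      · exact ⟨by rw [← hp, hπ], h.ne'⟩
      · simp [hp, h.asymm, h] at hne
    · rintro ⟨hp, _⟩
      have hq : π j = i := by rw [← hp, hπ]
      simp [hq, h, h.asymm]

lemma rc_count {n : ℕ} (π : Equiv.Perm (Fin n)) (hπ : ∀ x, π (π x) = x) (k l : ℕ) :
    rc (invMat π) k l =
      (Finset.univ.filter (fun i : Fin n => (i : ℕ) < k ∧ ((π i : ℕ)) < l ∧ π i ≠ i)).card := by
  classical
  unfold rc
  rw [rank_monomial]
  · apply Finset.card_bij (fun x _ => Fin.castLE (min_le_right k n) x)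
    · intro x hx
      simp only [Finset.mem_filter, Finset.mem_univ, true_and] at hx ⊢
      obtain ⟨y, hy⟩ := hx
      rw [submatrix_apply, invMat_ne_zero_iff π hπ] at hy
      refine ⟨lt_of_lt_of_le x.2 (min_le_left k n), ?_, ?_⟩
      · rw [hy.1]
        exact lt_of_lt_of_le y.2 (min_le_left l n)
      · rw [hy.1]
        exact Ne.symm hy.2
    · intro x _ x' _ h
      exact Fin.castLE_injective _ h
    · intro i hi
      simp only [Finset.mem_filter, Finset.mem_univ, true_and] at hi
      obtain ⟨hik, hil, hne⟩ := hi
      have hx : (i : ℕ) < min k n := lt_min hik i.2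
      refine ⟨⟨(i : ℕ), hx⟩, ?_, rfl⟩
      simp only [Finset.mem_filter, Finset.mem_univ, true_and]
      have hy : ((π i : ℕ)) < min l n := lt_min hil (π i).2
      refine ⟨⟨(π i : ℕ), hy⟩, ?_⟩
      rw [submatrix_apply, invMat_ne_zero_iff π hπ]
      constructor
      · apply Fin.ext; rfl
      · intro he
        apply hne
        apply Fin.ext
        have h3 := congrArg Fin.val he
        simpa using h3.symm
  · intro x x' y hx hx'
    rw [submatrix_apply, invMat_ne_zero_iff π hπ] at hx hx'
    apply Fin.ext
    have h2 : π (Fin.castLE (min_le_right k n) x) = π (Fin.castLE (min_le_right k n) x') := by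
      rw [hx.1, hx'.1]
    exact congrArg Fin.val (Fin.castLE_injective _ (π.injective h2))

/-- If the involution `π ∈ S_{n+1}` fixes `n+1` and `πₙ ∈ Sₙ` is its
restriction to `{1,…,n}`, then `𝔄(π) = 𝔄(πₙ) + #{a : πₙ(a) = a}`. -/
theorem stmt12 (n : ℕ) (π : Equiv.Perm (Fin (n + 1))) (hπ : π * π = 1)
    (hlast : π (Fin.last n) = Fin.last n)
    (πn : Equiv.Perm (Fin n)) (hres : ∀ a : Fin n, ((πn a : ℕ)) = ((π a.castSucc : ℕ))) :
    AA (invMat π) = AA (invMat πn) + Nat.card {a : Fin n // πn a = a} := by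
  classical
  have hπ' : ∀ x, π (π x) = x := fun x => by
    rw [← Equiv.Perm.mul_apply, hπ, Equiv.Perm.one_apply]
  have hcast : ∀ a : Fin n, π a.castSucc = (πn a).castSucc := fun a =>
    Fin.ext (by simpa using (hres a).symm)
  have hπn : ∀ a, πn (πn a) = a := by
    intro a
    have h := hπ' a.castSucc
    rw [hcast, hcast] at h
    exact Fin.castSucc_injective _ h
  -- π i ≠ i → i ≠ last
  have hne_last : ∀ i : Fin (n+1), π i ≠ i → (i : ℕ) < n := by
    intro i h
    rcases Fin.lt_or_eq_of_le (Fin.le_last i) with hl | he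
    · exact hl
    · exact absurd (he ▸ hlast) (he ▸ h)
  -- key: rc agrees
  have hrc : ∀ k l, rc (invMat π) k l = rc (invMat πn) k l := by
    intro k l
    rw [rc_count π hπ' k l, rc_count πn hπn k l]
    refine Finset.card_bij'
      (fun i hi => (⟨(i : ℕ), hne_last i (by
        simp only [Finset.mem_filter, Finset.mem_univ, true_and] at hi; exact hi.2.2)⟩ : Fin n))
      (fun a _ => a.castSucc) ?_ ?_ ?_ ?_
    · intro i hi
      simp only [Finset.mem_filter, Finset.mem_univ, true_and] at hi ⊢
      obtain ⟨h1, h2, h3⟩ := hi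
      set a : Fin n := ⟨(i : ℕ), hne_last i h3⟩
      have hia : a.castSucc = i := Fin.ext rfl
      have hva : (πn a : ℕ) = (π i : ℕ) := by rw [hres a, hia]
      refine ⟨h1, by rw [hva]; exact h2, ?_⟩
      intro hfix
      apply h3
      rw [← hia, hcast a, hfix, hia]
    · intro a ha
      simp only [Finset.mem_filter, Finset.mem_univ, true_and] at ha ⊢
      obtain ⟨h1, h2, h3⟩ := ha
      refine ⟨by simpa using h1, ?_, ?_⟩
      · rw [hcast a]; simpa using h2
      · rw [hcast a]
        intro h
        exact h3 (Fin.castSucc_injective _ h)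
    · intro i hi
      exact Fin.ext rfl
    · intro a ha
      exact Fin.ext rfl
  -- rc of πn: column n+1 same as column n
  have hcoldrop : ∀ k, rc (invMat πn) k (n+1) = rc (invMat πn) k n := by
    intro k
    rw [rc_count πn hπn, rc_count πn hπn]
    congr 1
    apply Finset.filter_congr
    intro a _
    simp only [and_congr_right_iff]
    intro _
    constructor
    · intro ⟨_, h⟩; exact ⟨(πn a).2, h⟩
    · intro ⟨_, h⟩; exact ⟨Nat.lt_succ_of_lt (πn a).2, h⟩
  -- increment criterion
  have hinc : ∀ a : Fin n, (rc (invMat πn) ((a : ℕ)+1) n = rc (invMat πn) (a : ℕ) n) ↔ πn a = a := by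
    intro a
    rw [rc_count πn hπn, rc_count πn hπn]
    set s₁ := Finset.univ.filter (fun b : Fin n => (b:ℕ) < (a:ℕ)+1 ∧ (πn b : ℕ) < n ∧ πn b ≠ b)
    set s₂ := Finset.univ.filter (fun b : Fin n => (b:ℕ) < (a:ℕ) ∧ (πn b : ℕ) < n ∧ πn b ≠ b)
    have hsub : s₂ ⊆ s₁ := by
      intro b hb
      simp only [s₁, s₂, Finset.mem_filter, Finset.mem_univ, true_and] at hb ⊢
      exact ⟨Nat.lt_succ_of_lt hb.1, hb.2⟩
    constructor
    · intro hcard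
      by_contra hfix
      have hmem : a ∈ s₁ := by
        simp only [s₁, Finset.mem_filter, Finset.mem_univ, true_and]
        exact ⟨Nat.lt_succ_self _, (πn a).2, hfix⟩
      have : s₂ = s₁ := Finset.eq_of_subset_of_card_le hsub (le_of_eq hcard)
      rw [← this] at hmem
      simp only [s₂, Finset.mem_filter] at hmem
      exact lt_irrefl _ hmem.2.1
    · intro hfix
      congr 1
      apply Finset.ext
      intro b
      simp only [s₁, s₂, Finset.mem_filter, Finset.mem_univ, true_and]
      constructor
      · intro ⟨h1, h2, h3⟩
        refine ⟨?_, h2, h3⟩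
        rcases Nat.lt_succ_iff_lt_or_eq.mp h1 with h | h
        · exact h
        · exfalso; apply h3; rw [show b = a from Fin.ext h]; exact hfix
      · intro ⟨h1, h2, h3⟩
        exact ⟨Nat.lt_succ_of_lt h1, h2, h3⟩
  -- now split AA
  unfold AA
  rw [← Finset.card_filter_add_card_filter_not
    (s := Finset.univ.filter (fun p : Fin (n+1) × Fin (n+1) =>
      (p.1 : ℕ) < (p.2 : ℕ) ∧
        rc (invMat π) ((p.1 : ℕ) + 1) ((p.2 : ℕ) + 1) = rc (invMat π) (p.1 : ℕ) (p.2 : ℕ)))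
    (p := fun p => p.2 = Fin.last n)]
  rw [Nat.add_comm]
  congr 1
  · -- non-last part = AA πn
    rw [Finset.filter_filter]
    refine Finset.card_bij'
      (fun p hp => ((⟨(p.1 : ℕ), ?_⟩ : Fin n), (⟨(p.2 : ℕ), ?_⟩ : Fin n)))
      (fun q _ => (q.1.castSucc, q.2.castSucc)) ?_ ?_ ?_ ?_
    · simp only [Finset.mem_filter, Finset.mem_univ, true_and] at hp
      have h2 : (p.2 : ℕ) < n := by
        rcases Fin.lt_or_eq_of_le (Fin.le_last p.2) with hl | he
        · exact hl
        · exact absurd he hp.2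
      exact lt_trans hp.1.1 h2
    · simp only [Finset.mem_filter, Finset.mem_univ, true_and] at hp
      rcases Fin.lt_or_eq_of_le (Fin.le_last p.2) with hl | he
      · exact hl
      · exact absurd he hp.2
    · intro p hp
      simp only [Finset.mem_filter, Finset.mem_univ, true_and] at hp ⊢
      exact ⟨hp.1.1, by rw [← hrc, ← hrc]; exact hp.1.2⟩
    · intro q hq
      simp only [Finset.mem_filter, Finset.mem_univ, true_and] at hq ⊢
      refine ⟨⟨by simpa using hq.1, ?_⟩, ?_⟩
      · simp only [Fin.coe_castSucc]
        rw [hrc, hrc]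
        exact hq.2
      · intro h
        have : (q.2 : ℕ) = n := by
          have := congrArg Fin.val h
          simpa using this
        exact absurd this (Nat.ne_of_lt q.2.2)
    · intro p hp
      rw [Prod.ext_iff]
      exact ⟨Fin.ext rfl, Fin.ext rfl⟩
    · intro q hq
      rw [Prod.ext_iff]
      exact ⟨Fin.ext rfl, Fin.ext rfl⟩
  · -- last part = fixed points
    rw [Finset.filter_filter, Nat.card_eq_fintype_card, Fintype.card_subtype]
    refine Finset.card_bij'
      (fun p hp => (⟨(p.1 : ℕ), ?_⟩ : Fin n))
      (fun a _ => (a.castSucc, Fin.last n)) ?_ ?_ ?_ ?_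
    · simp only [Finset.mem_filter, Finset.mem_univ, true_and] at hp
      have := hp.1.1
      rw [hp.2] at this
      simpa using this
    · intro p hp
      simp only [Finset.mem_filter, Finset.mem_univ, true_and] at hp ⊢
      obtain ⟨⟨h1, h2⟩, h3⟩ := hp
      rw [h3] at h1 h2
      simp only [Fin.val_last] at h1 h2
      rw [hrc, hrc, hcoldrop] at h2
      exact (hinc ⟨(p.1 : ℕ), by simpa using h1⟩).mp h2
    · intro a ha
      simp only [Finset.mem_filter, Finset.mem_univ, true_and] at ha ⊢
      refine ⟨⟨by simp, ?_⟩, trivial⟩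
      simp only [Fin.coe_castSucc, Fin.val_last]
      rw [hrc, hrc, hcoldrop]
      exact (hinc a).mpr ha
    · intro p hp
      simp only [Finset.mem_filter, Finset.mem_univ, true_and] at hp
      rw [Prod.ext_iff]
      exact ⟨Fin.ext rfl, hp.2.symm⟩
    · intro a ha
      exact Fin.ext rfl
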